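/- For all integers u ≥ v ≥ 2, the following two inequalities hold: E(v) + E_s(u) ≤ E(u) + E_s(v) and E(v) + E_t(u) ≤ E(u) + E_t(v). -/
import Mathlib


/-- `Eng K` is the largest squared modulus of a point of the modified
`2^K`-ary QAM constellation. -/
noncomputable def Eng (K : ℕ) : ℝ :=
  if K = 2 then 2
  else if K = 3 then 10
  else if K % 2 = 0 then 2 * ((2 : ℝ) ^ (K / 2) - 1) ^ 2
  else ((2 : ℝ) ^ ((K - 1) / 2) - 1) ^ 2 + (3 * (2 : ℝ) ^ ((K - 3) / 2) - 1) ^ 2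

/-- `EngS K` is the larger squared modulus among the nearest neighbors of a
largest-energy corner point of the modified `2^K`-ary QAM constellation
(with the convention `EngS 2 = EngS 3 = 2`). -/
noncomputable def EngS (K : ℕ) : ℝ :=
  if K = 2 then 2
  else if K = 3 then 2
  else if K % 2 = 0 then ((2 : ℝ) ^ (K / 2) - 1) ^ 2 + ((2 : ℝ) ^ (K / 2) - 3) ^ 2
  else ((2 : ℝ) ^ ((K - 1) / 2) - 3) ^ 2 + (3 * (2 : ℝ) ^ ((K - 3) / 2) - 1) ^ 2

/-- `EngT K` is the smaller squared modulus among the nearest neighbors of a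
largest-energy corner point of the modified `2^K`-ary QAM constellation
(with the convention `EngT 2 = EngT 3 = 2`). -/
noncomputable def EngT (K : ℕ) : ℝ :=
  if K = 2 then 2
  else if K = 3 then 2
  else if K % 2 = 0 then ((2 : ℝ) ^ (K / 2) - 1) ^ 2 + ((2 : ℝ) ^ (K / 2) - 3) ^ 2
  else ((2 : ℝ) ^ ((K - 1) / 2) - 1) ^ 2 + (3 * (2 : ℝ) ^ ((K - 3) / 2) - 3) ^ 2

lemma eng_even (m : ℕ) : Eng (2*m+4) = 2 * ((2 : ℝ) ^ (m+2) - 1) ^ 2 := by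
  have h1 : (2*m+4) / 2 = m+2 := by omega
  unfold Eng
  rw [if_neg (by omega), if_neg (by omega), if_pos (by omega), h1]

lemma engS_even (m : ℕ) :
    EngS (2*m+4) = ((2 : ℝ) ^ (m+2) - 1) ^ 2 + ((2 : ℝ) ^ (m+2) - 3) ^ 2 := by
  have h1 : (2*m+4) / 2 = m+2 := by omega
  unfold EngS
  rw [if_neg (by omega), if_neg (by omega), if_pos (by omega), h1]

lemma engT_even (m : ℕ) :
    EngT (2*m+4) = ((2 : ℝ) ^ (m+2) - 1) ^ 2 + ((2 : ℝ) ^ (m+2) - 3) ^ 2 := by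
  have h1 : (2*m+4) / 2 = m+2 := by omega
  unfold EngT
  rw [if_neg (by omega), if_neg (by omega), if_pos (by omega), h1]

lemma eng_odd (m : ℕ) :
    Eng (2*m+5) = ((2 : ℝ) ^ (m+2) - 1) ^ 2 + (3 * (2 : ℝ) ^ (m+1) - 1) ^ 2 := by
  have h1 : (2*m+5-1) / 2 = m+2 := by omega
  have h2 : (2*m+5-3) / 2 = m+1 := by omega
  unfold Eng
  rw [if_neg (by omega), if_neg (by omega), if_neg (by omega), h1, h2]

lemma engS_odd (m : ℕ) :
    EngS (2*m+5) = ((2 : ℝ) ^ (m+2) - 3) ^ 2 + (3 * (2 : ℝ) ^ (m+1) - 1) ^ 2 := by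
  have h1 : (2*m+5-1) / 2 = m+2 := by omega
  have h2 : (2*m+5-3) / 2 = m+1 := by omega
  unfold EngS
  rw [if_neg (by omega), if_neg (by omega), if_neg (by omega), h1, h2]

lemma engT_odd (m : ℕ) :
    EngT (2*m+5) = ((2 : ℝ) ^ (m+2) - 1) ^ 2 + (3 * (2 : ℝ) ^ (m+1) - 3) ^ 2 := by
  have h1 : (2*m+5-1) / 2 = m+2 := by omega
  have h2 : (2*m+5-3) / 2 = m+1 := by omega
  unfold EngT
  rw [if_neg (by omega), if_neg (by omega), if_neg (by omega), h1, h2]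

lemma stepS (K : ℕ) (hK : 2 ≤ K) :
    Eng K - EngS K ≤ Eng (K+1) - EngS (K+1) := by
  have hx : ∀ m : ℕ, (1:ℝ) ≤ 2 ^ m := fun m => by exact_mod_cast Nat.one_le_two_pow (n := m)
  rcases Nat.even_or_odd K with ⟨m, hm⟩ | ⟨m, hm⟩
  · -- K even
    rcases Nat.eq_or_lt_of_le hK with h | h
    · simp [← h, Eng, EngS]; norm_num
    · obtain ⟨n, hn⟩ : ∃ n, K = 2*n+4 := ⟨m - 2, by omega⟩
      rw [hn, show 2*n+4+1 = 2*n+5 by omega, eng_even, engS_even, eng_odd, engS_odd]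
      nlinarith [hx n, hx (n+1), show (2:ℝ)^(n+2)=2*2^(n+1) by ring]
  · -- K odd
    rcases Nat.eq_or_lt_of_le (show 3 ≤ K by omega) with h | h
    · have : K = 3 := h.symm
      subst this
      have := eng_even 0; have := engS_even 0
      simp [Eng, EngS] at *
      norm_num [eng_even 0, engS_even 0, Eng, EngS]
    · obtain ⟨n, hn⟩ : ∃ n, K = 2*n+5 := ⟨m - 2, by omega⟩
      rw [hn, show 2*n+5+1 = 2*(n+1)+4 by omega, eng_odd, engS_odd, eng_even, engS_even]
      have := hx n
      have h2 : (2:ℝ) ^ (n+1+2) = 2 * (2 * (2 * 2^n)) := by ring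
      have h3 : (2:ℝ) ^ (n+2) = 2 * (2 * 2^n) := by ring
      have h4 : (2:ℝ) ^ (n+1) = 2 * 2^n := by ring
      rw [h2, h3, h4]; nlinarith

lemma stepT (K : ℕ) (hK : 2 ≤ K) :
    Eng K - EngT K ≤ Eng (K+1) - EngT (K+1) := by
  have hx : ∀ m : ℕ, (1:ℝ) ≤ 2 ^ m := fun m => by exact_mod_cast Nat.one_le_two_pow (n := m)
  rcases Nat.even_or_odd K with ⟨m, hm⟩ | ⟨m, hm⟩
  · rcases Nat.eq_or_lt_of_le hK with h | h
    · simp [← h, Eng, EngT]; norm_num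
    · obtain ⟨n, hn⟩ : ∃ n, K = 2*n+4 := ⟨m - 2, by omega⟩
      rw [hn, show 2*n+4+1 = 2*n+5 by omega, eng_even, engT_even, eng_odd, engT_odd]
      nlinarith [hx n, hx (n+1), show (2:ℝ)^(n+2)=2*2^(n+1) by ring]
  · rcases Nat.eq_or_lt_of_le (show 3 ≤ K by omega) with h | h
    · have : K = 3 := h.symm
      subst this
      norm_num [eng_even 0, engT_even 0, Eng, EngT]
    · obtain ⟨n, hn⟩ : ∃ n, K = 2*n+5 := ⟨m - 2, by omega⟩
      rw [hn, show 2*n+5+1 = 2*(n+1)+4 by omega, eng_odd, engT_odd, eng_even, engT_even]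
      have := hx n
      have h2 : (2:ℝ) ^ (n+1+2) = 2 * (2 * (2 * 2^n)) := by ring
      have h3 : (2:ℝ) ^ (n+2) = 2 * (2 * 2^n) := by ring
      have h4 : (2:ℝ) ^ (n+1) = 2 * 2^n := by ring
      rw [h2, h3, h4]; nlinarith

/-- Energy inequalities between a pair of QAM constellations (Lemma 3). -/
theorem eng_pair_inequalities (u v : ℕ) (hv : 2 ≤ v) (hvu : v ≤ u) :
    Eng v + EngS u ≤ Eng u + EngS v ∧ Eng v + EngT u ≤ Eng u + EngT v := by
  have monoS : ∀ w, v ≤ w → Eng v - EngS v ≤ Eng w - EngS w := by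
    intro w hw
    induction w, hw using Nat.le_induction with
    | base => exact le_refl _
    | succ n hn ih => exact ih.trans (stepS n (hv.trans hn))
  have monoT : ∀ w, v ≤ w → Eng v - EngT v ≤ Eng w - EngT w := by
    intro w hw
    induction w, hw using Nat.le_induction with
    | base => exact le_refl _
    | succ n hn ih => exact ih.trans (stepT n (hv.trans hn))
  exact ⟨by linarith [monoS u hvu], by linarith [monoT u hvu]⟩
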